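/- A four-coin currency A = (1, a_1, a_2, a_3) is orderly if and only if it is totally orderly. -/

import Mathlib

/-- The largest coin of the currency with coins `a 0, …, a k` that is `≤ c`
(or `0` if there is none). -/
def bestCoin (a : ℕ → ℕ) (k : ℕ) (c : ℕ) : ℕ :=
  ((Finset.range (k + 1)).filter fun j => a j ≤ c).sup a

/-- The number of coins used by the greedy algorithm to pay the amount `c`,
using the currency with coins `a 0, …, a k`. -/
def grd (a : ℕ → ℕ) (k : ℕ) : ℕ → ℕ
  | 0 => 0
  | c + 1 =>
    if h : 1 ≤ bestCoin a k (c + 1) then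
      grd a k (c + 1 - bestCoin a k (c + 1)) + 1
    else 0
  decreasing_by omega

/-- The minimal number of coins needed to pay the amount `c`,
using the currency with coins `a 0, …, a k`. -/
noncomputable def opt (a : ℕ → ℕ) (k : ℕ) (c : ℕ) : ℕ :=
  sInf {n | ∃ x : Fin (k + 1) → ℕ, (∑ i, x i) = n ∧ (∑ i, x i * a i.1) = c}

/-- `a 0, …, a k` is a currency: it starts with the coin `1` and is strictly increasing. -/
def IsCurrency (a : ℕ → ℕ) (k : ℕ) : Prop :=
  a 0 = 1 ∧ ∀ i j : ℕ, i < j → j ≤ k → a i < a j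

/-- The currency with coins `a 0, …, a k` is orderly: the greedy payment is
optimal for every positive amount. -/
def Orderly (a : ℕ → ℕ) (k : ℕ) : Prop :=
  ∀ c : ℕ, 0 < c → opt a k c = grd a k c

/-- The set `𝒜(a) = ⋃_{m ≥ 1} {m·a − l : 0 ≤ l ≤ m}`. -/
def calA (a : ℕ) : Set ℕ :=
  {x | ∃ m l : ℕ, 1 ≤ m ∧ l ≤ m ∧ x = m * a - l}

/-!
Currencies with at most two coins are always orderly, so everything hinges on the prefix
`(1, a₁, a₂)`. A currency is orderly as soon as adding any coin to an amount raises the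
greedy count by at most one, and for the coin `1` and for the largest coin this always holds.
Write `a₂ + s = q a₁` with `0 ≤ s < a₁`. If `s < q`, the coin `a₁` passes the test as well:
the only delicate case is a carry into `a₂`, and then the ones left over are no more than the
coins they replace precisely because `s < q`. If `q ≤ s`, the amount `q a₁` is paid greedily
with `1 + s > q` coins, and no fourth coin `a₃ > a₂` repairs this: depending on `a₃`, one of
`q a₁`, `a₂ + a₁` or `2 a₂` is still paid greedily with more coins than necessary.
-/

open Finset

variable {a : ℕ → ℕ} {k n : ℕ}

theorem bestCoin_le (a : ℕ → ℕ) (k n : ℕ) : bestCoin a k n ≤ n :=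
  Finset.sup_le fun _ hj => (mem_filter.1 hj).2

theorem le_bestCoin {j : ℕ} (hj : j ≤ k) (h : a j ≤ n) : a j ≤ bestCoin a k n :=
  Finset.le_sup (mem_filter.2 ⟨mem_range.2 (Nat.lt_succ_of_le hj), h⟩)

theorem exists_bestCoin_eq (a : ℕ → ℕ) (k : ℕ) {n : ℕ} (h : a 0 ≤ n) :
    ∃ j ≤ k, a j ≤ n ∧ bestCoin a k n = a j := by
  obtain ⟨j, hj, hB⟩ := exists_mem_eq_sup ((range (k + 1)).filter fun j => a j ≤ n)
    ⟨0, mem_filter.2 ⟨mem_range.2 k.succ_pos, h⟩⟩ a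
  obtain ⟨hjk, hjn⟩ := mem_filter.1 hj
  exact ⟨j, Nat.le_of_lt_succ (mem_range.1 hjk), hjn, hB⟩

theorem bestCoin_mono {m : ℕ} (h : m ≤ n) : bestCoin a k m ≤ bestCoin a k n :=
  sup_mono (monotone_filter_right _ fun _ _ hj => hj.trans h)

theorem one_le_bestCoin (h0 : a 0 = 1) (hn : 1 ≤ n) : 1 ≤ bestCoin a k n :=
  h0 ▸ le_bestCoin (Nat.zero_le k) (h0 ▸ hn)

theorem bestCoin_succ_of_lt (h : n < a (k + 1)) : bestCoin a (k + 1) n = bestCoin a k n := by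
  rw [bestCoin, range_add_one, filter_insert, if_neg h.not_ge, bestCoin]

theorem grd_zero (a : ℕ → ℕ) (k : ℕ) : grd a k 0 = 0 := by
  rw [grd]

theorem grd_of_one_le_bestCoin (h : 1 ≤ bestCoin a k n) :
    grd a k n = grd a k (n - bestCoin a k n) + 1 := by
  obtain ⟨m, rfl⟩ : ∃ m, n = m + 1 := ⟨n - 1, by have := bestCoin_le a k n; omega⟩
  rw [grd, dif_pos h]

theorem grd_succ_of_lt (h : n < a (k + 1)) : grd a (k + 1) n = grd a k n := by
  induction n using Nat.strong_induction_on with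
  | _ n ih =>
  rcases n with _ | n
  · rw [grd_zero, grd_zero]
  · rw [grd, grd, bestCoin_succ_of_lt h]
    split_ifs with hB
    · rw [ih _ (by omega) (by omega)]
    · rfl

theorem grd_succ_le (h0 : a 0 = 1) (n : ℕ) : grd a k (n + 1) ≤ grd a k n + 1 := by
  induction n using Nat.strong_induction_on with
  | _ n ih =>
  obtain ⟨j, hjk, hjn, hB⟩ := exists_bestCoin_eq a k (n := n + 1) (by omega)
  have hB1 : 1 ≤ bestCoin a k (n + 1) := one_le_bestCoin h0 (by omega)
  rw [grd_of_one_le_bestCoin hB1]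
  rcases Nat.lt_or_eq_of_le hjn with hjn | hjn
  · -- the greedy coin for `n + 1` is also the greedy coin for `n`
    have hB' : bestCoin a k n = a j :=
      le_antisymm (hB ▸ bestCoin_mono (Nat.le_succ n)) (le_bestCoin hjk (by omega))
    rw [grd_of_one_le_bestCoin (n := n) (by omega), hB, hB']
    have := ih (n - a j) (by omega)
    rw [show n + 1 - a j = n - a j + 1 by omega]
    omega
  · rw [hB, hjn, Nat.sub_self, grd_zero]
    omega

theorem opt_le_of_sum_eq (x : Fin (k + 1) → ℕ) (hx : ∑ i, x i * a i = n) :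
    opt a k n ≤ ∑ i, x i :=
  Nat.sInf_le ⟨x, rfl, hx⟩

theorem exists_sum_eq_opt (h0 : a 0 = 1) (k n : ℕ) :
    ∃ x : Fin (k + 1) → ℕ, ∑ i, x i = opt a k n ∧ ∑ i, x i * a i = n :=
  Nat.sInf_mem (s := {m | ∃ x : Fin (k + 1) → ℕ, ∑ i, x i = m ∧ ∑ i, x i * a i = n})
    ⟨n, Pi.single 0 n, by simp, by simp [Pi.single_apply, h0]⟩

theorem opt_add_le (h0 : a 0 = 1) (m n : ℕ) : opt a k (m + n) ≤ opt a k m + opt a k n := by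
  obtain ⟨x, hx, hxm⟩ := exists_sum_eq_opt h0 k m
  obtain ⟨y, hy, hyn⟩ := exists_sum_eq_opt h0 k n
  rw [← hx, ← hy, ← sum_add_distrib]
  exact opt_le_of_sum_eq (x + y) (by simp [add_mul, sum_add_distrib, hxm, hyn])

theorem opt_coin_le {j : ℕ} (hj : j ≤ k) : opt a k (a j) ≤ 1 := by
  simpa using opt_le_of_sum_eq (a := a) (Pi.single (⟨j, by omega⟩ : Fin (k + 1)) 1)
    (by simp [Pi.single_apply])

theorem opt_le_grd (h0 : a 0 = 1) (n : ℕ) : opt a k n ≤ grd a k n := by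
  induction n using Nat.strong_induction_on with
  | _ n ih =>
  rcases Nat.eq_zero_or_pos n with rfl | hn
  · simpa [grd_zero] using opt_le_of_sum_eq (a := a) (k := k) 0 (by simp)
  obtain ⟨j, hjk, hjn, hB⟩ := exists_bestCoin_eq a k (n := n) (by omega)
  have hB1 : 1 ≤ bestCoin a k n := one_le_bestCoin h0 hn
  rw [grd_of_one_le_bestCoin hB1]
  calc opt a k n = opt a k (n - a j + a j) := by rw [Nat.sub_add_cancel hjn]
    _ ≤ opt a k (n - a j) + 1 := (opt_add_le h0 _ _).trans (by grw [opt_coin_le hjk])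
    _ ≤ grd a k (n - bestCoin a k n) + 1 := by rw [hB]; grw [ih _ (by omega)]

theorem grd_add_mul_le (hstep : ∀ m, ∀ j ≤ k, grd a k (m + a j) ≤ grd a k m + 1)
    {j : ℕ} (hj : j ≤ k) (m t : ℕ) : grd a k (m + t * a j) ≤ grd a k m + t := by
  induction t with
  | zero => simp
  | succ t ih =>
    rw [add_one_mul, ← add_assoc]
    grw [hstep _ j hj, ih]
    rfl

theorem grd_add_sum_le (hstep : ∀ m, ∀ j ≤ k, grd a k (m + a j) ≤ grd a k m + 1)
    (x : Fin (k + 1) → ℕ) (s : Finset (Fin (k + 1))) (m : ℕ) :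
    grd a k (m + ∑ i ∈ s, x i * a i) ≤ grd a k m + ∑ i ∈ s, x i := by
  induction s using Finset.induction_on generalizing m with
  | empty => simp
  | insert i s hi ih =>
    rw [sum_insert hi, sum_insert hi, add_comm (x i * a i), ← add_assoc]
    grw [grd_add_mul_le hstep (Nat.le_of_lt_succ i.2), ih]
    omega

theorem orderly_of_grd_add_coin_le (h0 : a 0 = 1)
    (hstep : ∀ m, ∀ j ≤ k, grd a k (m + a j) ≤ grd a k m + 1) : Orderly a k := by
  intro n _
  obtain ⟨x, hx, hxn⟩ := exists_sum_eq_opt h0 k n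
  refine le_antisymm (opt_le_grd h0 n) ?_
  simpa [grd_zero, hx, hxn] using grd_add_sum_le hstep x univ 0

theorem Orderly.grd_le_sum (h : Orderly a k) (hn : 0 < n) (x : Fin (k + 1) → ℕ)
    (hx : ∑ i, x i * a i = n) : grd a k n ≤ ∑ i, x i :=
  h n hn ▸ opt_le_of_sum_eq x hx

theorem exists_add_eq_mul (c : ℕ) {b : ℕ} (hb : 0 < b) : ∃ q s, c + s = q * b ∧ s < b := by
  have hdiv := Nat.div_add_mod c b
  have hmod := Nat.mod_lt c hb
  rcases Nat.eq_zero_or_pos (c % b) with h0 | hpos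
  · exact ⟨c / b, 0, by rw [mul_comm]; omega, hb⟩
  · exact ⟨c / b + 1, b - c % b, by rw [add_one_mul, mul_comm]; omega, by omega⟩

theorem Orderly.grd_le_four (h : Orderly a 3) (hn : 0 < n) (x₀ x₁ x₂ x₃ : ℕ)
    (hx : x₀ * a 0 + x₁ * a 1 + x₂ * a 2 + x₃ * a 3 = n) : grd a 3 n ≤ x₀ + x₁ + x₂ + x₃ := by
  simpa [Fin.sum_univ_four] using h.grd_le_sum hn ![x₀, x₁, x₂, x₃]
    (by simpa [Fin.sum_univ_four] using hx)

namespace IsCurrency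

theorem apply_le_apply (h : IsCurrency a k) {i j : ℕ} (hij : i ≤ j) (hj : j ≤ k) : a i ≤ a j :=
  hij.eq_or_lt.elim (fun e => e ▸ le_rfl) fun hlt => (h.2 i j hlt hj).le

theorem one_lt (h : IsCurrency a k) (hk : 1 ≤ k) : 1 < a 1 :=
  h.1 ▸ h.2 0 1 one_pos hk

theorem mono (h : IsCurrency a k) {l : ℕ} (hl : l ≤ k) : IsCurrency a l :=
  ⟨h.1, fun i j hij hj => h.2 i j hij (hj.trans hl)⟩

theorem bestCoin_eq_top (h : IsCurrency a k) (hn : a k ≤ n) : bestCoin a k n = a k :=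
  le_antisymm
    (Finset.sup_le fun _ hj =>
      h.apply_le_apply (Nat.le_of_lt_succ (mem_range.1 (mem_filter.1 hj).1)) le_rfl)
    (le_bestCoin le_rfl hn)

theorem grd_add_top (h : IsCurrency a k) (n : ℕ) : grd a k (n + a k) = grd a k n + 1 := by
  have hk : 1 ≤ a k := h.1 ▸ h.apply_le_apply (Nat.zero_le k) le_rfl
  rw [grd_of_one_le_bestCoin (by rwa [h.bestCoin_eq_top (Nat.le_add_left _ _)]),
    h.bestCoin_eq_top (Nat.le_add_left _ _), Nat.add_sub_cancel]

theorem grd_mul_add_top (h : IsCurrency a k) (m n : ℕ) :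
    grd a k (m * a k + n) = m + grd a k n := by
  induction m with
  | zero => simp
  | succ m ih => rw [add_one_mul, add_right_comm, h.grd_add_top, ih]; ring

theorem grd_eq_of_lt (h : IsCurrency a k) {l : ℕ} (hl : l ≤ k) (hn : n < a (l + 1)) :
    grd a k n = grd a l n := by
  induction k with
  | zero => rw [Nat.le_zero.1 hl]
  | succ k ih =>
    rcases hl.eq_or_lt with rfl | hl
    · rfl
    rw [grd_succ_of_lt (hn.trans_le (h.apply_le_apply hl le_rfl)), ih (h.mono k.le_succ) (by omega)]

theorem grd_eq_self_of_lt (h : IsCurrency a k) (hn : n < a 1) : grd a k n = n := by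
  rw [h.grd_eq_of_lt (Nat.zero_le k) hn]
  simpa [h.1, grd_zero] using (h.mono (Nat.zero_le k)).grd_mul_add_top n 0

theorem grd_one_eq (h : IsCurrency a 1) {u v : ℕ} (hv : v < a 1) :
    grd a 1 (u * a 1 + v) = u + v := by
  rw [h.grd_mul_add_top, h.grd_eq_self_of_lt hv]

theorem orderly_of_grd_add_middle_coin_le (h : IsCurrency a k)
    (hstep : ∀ m j, 0 < j → j < k → grd a k (m + a j) ≤ grd a k m + 1) : Orderly a k := by
  refine orderly_of_grd_add_coin_le h.1 fun m j hj => ?_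
  rcases Nat.eq_zero_or_pos j with rfl | hj0
  · rw [h.1]
    exact grd_succ_le h.1 m
  rcases hj.eq_or_lt with rfl | hjk
  · exact (h.grd_add_top m).le
  · exact hstep m j hj0 hjk

theorem orderly_of_le_one (h : IsCurrency a k) (hk : k ≤ 1) : Orderly a k :=
  h.orderly_of_grd_add_middle_coin_le fun _ _ hj hjk => by omega

theorem grd_two_add_coin_one_le (h : IsCurrency a 2) {q s : ℕ} (hq : a 2 + s = q * a 1)
    (hs : s < a 1) (hsq : s < q) (n : ℕ) : grd a 2 (n + a 1) ≤ grd a 2 n + 1 := by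
  have h1 : IsCurrency a 1 := h.mono one_le_two
  have hbc : a 1 < a 2 := h.2 1 2 one_lt_two le_rfl
  obtain ⟨m, r, hr, rfl⟩ : ∃ m r, r < a 2 ∧ n = m * a 2 + r :=
    ⟨n / a 2, n % a 2, Nat.mod_lt _ (by omega), by rw [mul_comm, Nat.div_add_mod]⟩
  obtain ⟨u, v, hv, rfl⟩ : ∃ u v, v < a 1 ∧ r = u * a 1 + v :=
    ⟨r / a 1, r % a 1, Nat.mod_lt _ (by omega), by rw [mul_comm, Nat.div_add_mod]⟩
  rw [add_assoc, h.grd_mul_add_top, h.grd_mul_add_top, h.grd_eq_of_lt one_le_two hr,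
    h1.grd_one_eq hv]
  rcases lt_or_ge (u * a 1 + v + a 1) (a 2) with hlt | hge
  · rw [h.grd_eq_of_lt one_le_two hlt, h1.grd_add_top, h1.grd_one_eq hv]
    omega
  · -- the greedy algorithm pays `a 2` and then `w < a 1` in ones
    obtain ⟨w, hw⟩ : ∃ w, u * a 1 + v + a 1 = w + a 2 := ⟨_, (Nat.sub_add_cancel hge).symm⟩
    rw [hw, h.grd_add_top, h.grd_eq_self_of_lt (show w < a 1 by omega)]
    obtain ⟨e, rfl⟩ := Nat.exists_eq_add_of_lt
      (Nat.lt_of_mul_lt_mul_right (a := a 1) (show u * a 1 < q * a 1 by omega))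
    have hwe : w + e * a 1 = v + s := by
      have : (u + e + 1) * a 1 = u * a 1 + e * a 1 + a 1 := by ring
      omega
    rcases e with _ | e
    · omega
    · have : a 1 ≤ (e + 1) * a 1 := Nat.le_mul_of_pos_left _ e.succ_pos
      omega

theorem orderly_two (h : IsCurrency a 2) {q s : ℕ} (hq : a 2 + s = q * a 1) (hs : s < a 1)
    (hsq : s < q) : Orderly a 2 :=
  h.orderly_of_grd_add_middle_coin_le fun m j hj hj2 => by
    obtain rfl : j = 1 := by omega
    exact h.grd_two_add_coin_one_le hq hs hsq m

theorem not_orderly_three (h : IsCurrency a 3) {q s : ℕ} (hq : a 2 + s = q * a 1)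
    (hs : s < a 1) (hqs : q ≤ s) : ¬Orderly a 3 := by
  intro hord
  have h2 : IsCurrency a 2 := h.mono (by norm_num)
  have hb : 1 < a 1 := h.one_lt (by norm_num)
  have hbc : a 1 < a 2 := h.2 1 2 one_lt_two (by norm_num)
  have hcd : a 2 < a 3 := h.2 2 3 (by norm_num) le_rfl
  have hq2 : 2 ≤ q := Nat.lt_of_mul_lt_mul_right (a := a 1) (show 1 * a 1 < q * a 1 by omega)
  rcases lt_or_ge (a 2 + s) (a 3) with hd | hd
  · -- `q * a 1` takes `1 + s` coins greedily
    have := hord.grd_le_four (n := a 2 + s) (by omega) 0 q 0 0 (by simp [hq])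
    rw [h.grd_eq_of_lt (l := 2) (by norm_num) hd, add_comm, h2.grd_add_top,
      h2.grd_eq_self_of_lt hs] at this
    omega
  obtain ⟨t, ht⟩ : ∃ t, a 3 = a 2 + t := ⟨a 3 - a 2, by omega⟩
  rcases lt_or_ge (t + 1) (a 1) with htb | htb
  · -- `a 2 + a 1` takes `1 + (a 1 - t) ≥ 3` coins greedily
    have := hord.grd_le_four (n := a 1 - t + a 3) (by omega) 0 1 1 0 (by simp; omega)
    rw [h.grd_add_top, h.grd_eq_self_of_lt (show a 1 - t < a 1 by omega)] at this
    omega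
  · -- here `a 3 = q * a 1` and `2 * a 2` takes `q + 1 ≥ 3` coins greedily
    obtain ⟨p, rfl⟩ := Nat.exists_eq_add_of_le' hq2
    have hp : (p + 2) * a 1 = p * a 1 + 2 * a 1 := by ring
    have := hord.grd_le_four (n := p * a 1 + 2 + a 3) (by omega) 0 0 2 0 (by simp; omega)
    rw [h.grd_add_top, h.grd_eq_of_lt (l := 1) (by norm_num) (show p * a 1 + 2 < a 2 by omega),
      (h.mono (by norm_num)).grd_one_eq (show 2 < a 1 by omega)] at this
    omega

theorem orderly_two_of_orderly_three (h : IsCurrency a 3) (hord : Orderly a 3) : Orderly a 2 := by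
  obtain ⟨q, s, hq, hs⟩ := exists_add_eq_mul (a 2) (h.one_lt (by norm_num)).le
  by_cases hsq : s < q
  · exact (h.mono (by norm_num)).orderly_two hq hs hsq
  · exact absurd hord (h.not_orderly_three hq hs (not_lt.1 hsq))

end IsCurrency

/-- A four-coin currency `(1, a₁, a₂, a₃)` is orderly iff it is totally orderly,
i.e. all its prefix currencies are orderly. -/
theorem four_coin_orderly_iff_totally (a₁ a₂ a₃ : ℕ)
    (h1 : 1 < a₁) (h2 : a₁ < a₂) (h3 : a₂ < a₃) :
    Orderly (fun i => if i = 0 then 1 else if i = 1 then a₁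
      else if i = 2 then a₂ else a₃) 3 ↔
      ∀ l ≤ 3, Orderly (fun i => if i = 0 then 1 else if i = 1 then a₁
        else if i = 2 then a₂ else a₃) l := by
  have hA : IsCurrency (fun i => if i = 0 then 1 else if i = 1 then a₁
      else if i = 2 then a₂ else a₃) 3 := by
    refine ⟨rfl, fun i j hij hj => ?_⟩
    interval_cases j <;> interval_cases i <;> simp <;> omega
  refine ⟨fun hord l hl => ?_, fun h => h 3 le_rfl⟩
  interval_cases l
  · exact (hA.mono (by norm_num)).orderly_of_le_one zero_le_one
  · exact (hA.mono (by norm_num)).orderly_of_le_one le_rfl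
  · exact hA.orderly_two_of_orderly_three hord
  · exact hord
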